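/- arXiv:2001.06259 — 3 statements merged into one kernel-verified Lean document; each statement's English description precedes it below -/
import Mathlib

section
/- Let E'/E/F be a tower of finite tamely ramified extensions of a non-Archimedean local field F. Then C_E ⊆ C_{E'}, where C_E (resp. C_{E'}) is the subgroup of E^× (resp. E'^×) generated by a standard uniformizer and all roots of unity of order prime to p. -/
/-- `z` is a root of unity of order prime to `p`. -/
def IsPrimeToRootOfUnity {M : Type*} [Monoid M] (p : ℕ) (z : M) : Prop :=
  ∃ m : ℕ, 0 < m ∧ Nat.Coprime m p ∧ z ^ m = 1

/-- The group `C_E`: the subgroup of `E^×` generated by the (standard) uniformizer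
`πE` and all roots of unity of order prime to `p`. -/
def stdGroup {E : Type*} [Field E] (p : ℕ) (πE : Eˣ) : Subgroup Eˣ :=
  Subgroup.closure ({πE} ∪ {z : Eˣ | IsPrimeToRootOfUnity p z})

/-- Let `E'/E/F` be a tower of finite tamely ramified extensions of a
non-Archimedean local field `F` of residue characteristic `p`.  Then `C_E ⊆ C_{E'}`,
where `C_E` (resp. `C_{E'}`) is the subgroup generated by a standard uniformizer
(one with `π_E^{e(E|F)} z = π_F` for some root of unity `z` of order prime to `p`,
resp. `π_{E'}^{e(E'|F)} z' = π_F`) and all roots of unity of order prime to `p`.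

Here `ν_{E'}` is the normalized valuation of `E'`, `e = e(E|F)` (prime to `p`, by
tameness), `f = e(E'|E) = ν_{E'}(π_E)`, and `e' = e(E'|F) = e·f`; the inclusion is that
of the image of `C_E` under the map on units induced by `E → E'`. -/
theorem stmt_4 {F E E' : Type*} [Field F] [Field E] [Field E']
    [Algebra F E] [Algebra F E'] [Algebra E E'] [IsScalarTower F E E']
    (p : ℕ) (hp : p.Prime)
    (νE' : E' → ℤ)
    (hmul' : ∀ ⦃x y : E'⦄, x ≠ 0 → y ≠ 0 → νE' (x * y) = νE' x + νE' y)
    (πF : F)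
    (e f e' : ℕ) (hepos : 0 < e) (hfpos : 0 < f) (he' : e' = e * f)
    (htame : Nat.Coprime e p)
    (πE zE : Eˣ) (hzE : IsPrimeToRootOfUnity p zE)
    (hstdE : ((πE ^ e * zE : Eˣ) : E) = algebraMap F E πF)
    (πE' zE' : E'ˣ) (hπE' : νE' ↑πE' = 1) (hzE' : IsPrimeToRootOfUnity p zE')
    (hstdE' : ((πE' ^ e' * zE' : E'ˣ) : E') = algebraMap F E' πF)
    (hf : νE' (algebraMap E E' ↑πE) = f) :
    (stdGroup p πE).map (Units.map (algebraMap E E').toMonoidHom) ≤ stdGroup p πE' := by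
  classical
  set φ := (algebraMap E E').toMonoidHom with hφ
  set Φ : Eˣ →* E'ˣ := Units.map φ with hΦ
  -- roots of unity are preserved
  have hroot : ∀ z : Eˣ, IsPrimeToRootOfUnity p z → IsPrimeToRootOfUnity p (Φ z) := by
    rintro z ⟨m, hm, hcop, hzm⟩
    exact ⟨m, hm, hcop, by rw [← map_pow, hzm, map_one]⟩
  -- key equation: (Φ πE)^e * Φ zE = πE'^e' * zE'
  have hkey : (Φ πE) ^ e * Φ zE = πE' ^ e' * zE' := by
    apply Units.ext
    have : ((Φ πE) ^ e * Φ zE : E'ˣ) = ((algebraMap E E') ((πE ^ e * zE : Eˣ) : E) : E') := by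
      simp [Φ, φ]
    rw [this, hstdE, ← IsScalarTower.algebraMap_apply, hstdE']
  -- the "correction" unit v := Φ πE * (πE' ^ f)⁻¹ is a root of unity of order prime to p
  set v : E'ˣ := Φ πE * (πE' ^ f)⁻¹ with hv
  obtain ⟨m1, hm1, hc1, hz1⟩ := hzE'
  obtain ⟨m2, hm2, hc2, hz2⟩ := hzE
  have hΦz2 : (Φ zE) ^ m2 = 1 := by rw [← map_pow, hz2, map_one]
  have hve : v ^ e = zE' * (Φ zE)⁻¹ := by
    have h1 : (Φ πE) ^ e = πE' ^ e' * zE' * (Φ zE)⁻¹ := by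
      rw [← hkey]; group
    have h2 : ((πE' ^ f)⁻¹) ^ e = (πE' ^ e')⁻¹ := by
      rw [inv_pow, ← pow_mul, he', mul_comm f e]
    rw [hv, mul_pow, h1, h2]
    rw [mul_comm (πE' ^ e') zE', mul_assoc zE', mul_assoc zE']
    congr 1
    rw [mul_comm (πE' ^ e') (Φ zE)⁻¹, mul_assoc, mul_inv_cancel, mul_one]
  have hvroot : IsPrimeToRootOfUnity p v := by
    refine ⟨e * (m1 * m2), by positivity, Nat.Coprime.mul htame (Nat.Coprime.mul hc1 hc2), ?_⟩
    have ha : zE' ^ (m1 * m2) = 1 := by rw [pow_mul, hz1, one_pow]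
    have hb : ((Φ zE)⁻¹) ^ (m1 * m2) = 1 := by
      rw [mul_comm m1 m2, pow_mul, inv_pow, hΦz2]; simp
    rw [pow_mul, hve, mul_pow, ha, hb, one_mul]
  -- membership facts in stdGroup p πE'
  have hπ'mem : πE' ∈ stdGroup p πE' :=
    Subgroup.subset_closure (Or.inl rfl)
  have hmemroot : ∀ w : E'ˣ, IsPrimeToRootOfUnity p w → w ∈ stdGroup p πE' := fun w hw =>
    Subgroup.subset_closure (Or.inr hw)
  have hπmem : Φ πE ∈ stdGroup p πE' := by
    have : Φ πE = πE' ^ f * v := by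
      rw [hv, mul_comm (Φ πE) (πE' ^ f)⁻¹, mul_inv_cancel_left]
    rw [this]
    exact mul_mem (pow_mem hπ'mem f) (hmemroot v hvroot)
  -- conclude
  rw [stdGroup, MonoidHom.map_closure]
  refine (Subgroup.closure_le _).2 ?_
  rintro x ⟨y, hy | hy, rfl⟩
  · rw [Set.mem_singleton_iff] at hy; subst hy; exact hπmem
  · exact hmemroot _ (hroot y hy)
end

section
/- Let E/F be a finite tamely ramified extension of a non-Archimedean local field, let c ∈ E^×, and let σ : E → F̄ be a morphism of F-algebras into an algebraic closure of F. Then σ(sr(c)) = sr(σ(c)), i.e., the standard representative map commutes with F-embeddings. -/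
/-- Let `E/F` be a finite tamely ramified extension of a
non-Archimedean local field, `c ∈ E^×`, and `σ : E → F̄` a morphism of `F`-algebras
into an algebraic closure of `F`.  Then `σ(sr(c)) = sr(σ(c))`: the standard
representative map commutes with `F`-embeddings.

Modelling: the relevant part of `F̄` is a finite tamely ramified extension `E'` of `F`
containing the image `σ(E)`, equipped with its normalized valuation `ν_{E'}`
(restricting the valuation `ord` of `F̄`, rescaled by `f = e(E'|E)`), standard
uniformizers `π_E, π_{E'}` with respect to the fixed `π_F`, and the standard-
representative groups `C_E = stdGroup p π_E`, `C_{E'} = stdGroup p π_{E'}`.  The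
standard representative `sr(c)` is characterized as the element `s ∈ C_E` with
`ν(s − c) > ν(c)` (rendered `s = c ∨ …`, the valuation of `0` being `+∞`).  The
conclusion says that `σ(s)` lies in `C_{E'}` and satisfies that characterization for
`σ(c)`, i.e. `σ(sr(c)) = sr(σ(c))`. -/
theorem stmt_6 {F E E' : Type*} [Field F] [Field E] [Field E']
    [Algebra F E] [Algebra F E']
    (p : ℕ) (hp : p.Prime)
    (νE : E → ℤ) (νE' : E' → ℤ)
    (hmul : ∀ ⦃x y : E⦄, x ≠ 0 → y ≠ 0 → νE (x * y) = νE x + νE y)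
    (hmul' : ∀ ⦃x y : E'⦄, x ≠ 0 → y ≠ 0 → νE' (x * y) = νE' x + νE' y)
    (πF : F)
    (e f e' : ℕ) (hepos : 0 < e) (hfpos : 0 < f) (he' : e' = e * f)
    (htame : Nat.Coprime e p) (htame' : Nat.Coprime e' p)
    (πE zE : Eˣ) (hπE : νE ↑πE = 1) (hzE : IsPrimeToRootOfUnity p zE)
    (hstdE : ((πE ^ e * zE : Eˣ) : E) = algebraMap F E πF)
    (πE' zE' : E'ˣ) (hπE' : νE' ↑πE' = 1) (hzE' : IsPrimeToRootOfUnity p zE')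
    (hstdE' : ((πE' ^ e' * zE' : E'ˣ) : E') = algebraMap F E' πF)
    -- the F-embedding σ : E → F̄ (with image inside E'), compatible with valuations
    (σ : E →ₐ[F] E')
    (hσν : ∀ x : E, x ≠ 0 → νE' (σ x) = f * νE x)
    -- `s = sr(c)`: the standard representative of `c`
    (c s : Eˣ) (hs : s ∈ stdGroup p πE)
    (hchar : (s : E) = (c : E) ∨ νE ((s : E) - (c : E)) > νE (c : E)) :
    ∃ s' : E'ˣ, (s' : E') = σ (s : E) ∧ s' ∈ stdGroup p πE' ∧
      (σ (s : E) = σ (c : E) ∨ νE' (σ (s : E) - σ (c : E)) > νE' (σ (c : E))) := by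
  classical
  set σu : Eˣ →* E'ˣ := Units.map (σ : E →* E') with hσudef
  have hcoe : ∀ x : Eˣ, ((σu x : E'ˣ) : E') = σ (x : E) := fun x => rfl
  -- key equation in units
  have hkey : σu (πE ^ e * zE) = πE' ^ e' * zE' := by
    apply Units.ext
    rw [hcoe, hstdE, σ.commutes]
    exact hstdE'.symm
  -- σu πE belongs to stdGroup p πE'
  obtain ⟨m₁, hm₁, hm₁p, hz₁⟩ := hzE'
  obtain ⟨m₂, hm₂, hm₂p, hz₂⟩ := hzE
  set u : E'ˣ := σu πE * (πE' ^ f)⁻¹ with hudef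
  have hue : u ^ e = zE' * (σu zE)⁻¹ := by
    have h1 : σu (πE ^ e) = πE' ^ e' * zE' * (σu zE)⁻¹ := by
      rw [eq_mul_inv_iff_mul_eq, ← map_mul, hkey]
    rw [hudef, mul_pow, ← map_pow, h1, inv_pow, ← pow_mul, mul_comm f e, ← he',
      mul_right_comm (πE' ^ e' * zE'), mul_right_comm (πE' ^ e') zE',
      mul_inv_cancel, one_mul]
  have hurou : IsPrimeToRootOfUnity p u := by
    refine ⟨e * (m₁ * m₂), by positivity, htame.mul (hm₁p.mul hm₂p), ?_⟩
    have ha : zE' ^ (m₁ * m₂) = 1 := by rw [pow_mul, hz₁, one_pow]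
    have hb : ((σu zE)⁻¹) ^ (m₁ * m₂) = 1 := by
      rw [inv_pow, mul_comm m₁ m₂, pow_mul, ← map_pow, hz₂, map_one, one_pow, inv_one]
    rw [pow_mul, hue, mul_pow, ha, hb, mul_one]
  have hπmem : σu πE ∈ stdGroup p πE' := by
    have hdec : πE' ^ f * u = σu πE := by
      rw [hudef, mul_comm (σu πE), mul_inv_cancel_left]
    rw [← hdec]
    have h1 : πE' ∈ stdGroup p πE' :=
      Subgroup.subset_closure (Set.mem_union_left _ rfl)
    have h2 : u ∈ stdGroup p πE' :=
      Subgroup.subset_closure (Set.mem_union_right _ hurou)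
    exact mul_mem (pow_mem h1 f) h2
  have hmem : σu s ∈ stdGroup p πE' := by
    refine Subgroup.closure_induction
      (p := fun x _ => σu x ∈ stdGroup p πE') ?_ ?_ ?_ ?_ hs
    · rintro x (rfl | ⟨m, hm, hmp, hz⟩)
      · exact hπmem
      · exact Subgroup.subset_closure
          (Set.mem_union_right _ ⟨m, hm, hmp, by rw [← map_pow, hz, map_one]⟩)
    · show σu 1 ∈ stdGroup p πE'
      rw [map_one]; exact one_mem _
    · intro x y _ _ hx hy
      show σu (x * y) ∈ stdGroup p πE'
      rw [map_mul]; exact mul_mem hx hy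
    · intro x _ hx
      show σu x⁻¹ ∈ stdGroup p πE'
      rw [map_inv]; exact inv_mem hx
  refine ⟨σu s, rfl, hmem, ?_⟩
  rcases hchar with h | h
  · exact Or.inl (congrArg σ h)
  by_cases hsc : (s : E) = (c : E)
  · exact Or.inl (congrArg σ hsc)
  right
  have h1 : νE' (σ ((s : E) - (c : E))) = f * νE ((s : E) - (c : E)) :=
    hσν _ (sub_ne_zero.mpr hsc)
  have h2 : νE' (σ (c : E)) = f * νE (c : E) := hσν _ c.ne_zero
  rw [map_sub] at h1
  rw [h1, h2]
  have hf : (0 : ℤ) < f := by exact_mod_cast hfpos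
  exact mul_lt_mul_of_pos_left h hf
end

section
/- Let [𝔄, n, r, β] be a tame pure stratum in A = End_F(V) with r = −k₀(β, 𝔄). Then for every element γ ∈ F[β] such that [𝔄, n, r, γ] is a simple stratum equivalent to [𝔄, n, r, β], the derived stratum [𝔅_γ, r, r−1, β − γ] is simple in End_{F[γ]}(V), where 𝔅_γ = End_{F[γ]}(V) ∩ 𝔄. -/
/-- A hereditary order in `End_K(V)`, via the filtration by the powers of its Jacobson
radical. -/
structure HereditaryOrder (K V : Type*) [Field K] [AddCommGroup V] [Module K V] where
  carrier : Subring (Module.End K V)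
  rad : ℤ → AddSubgroup (Module.End K V)
  rad_zero : rad 0 = carrier.toAddSubgroup
  rad_antitone : ∀ ⦃k l : ℤ⦄, k ≤ l → rad l ≤ rad k
  rad_mul : ∀ k l : ℤ, ∀ x ∈ rad k, ∀ y ∈ rad l, x * y ∈ rad (k + l)
  exists_val : ∀ x : Module.End K V, x ≠ 0 → ∃ k : ℤ, x ∈ rad k ∧ x ∉ rad (k + 1)

namespace HereditaryOrder

variable {K V : Type*} [Field K] [AddCommGroup V] [Module K V]

/-- `ν_𝔄(x) = k`. -/
def val (O : HereditaryOrder K V) (x : Module.End K V) (k : ℤ) : Prop :=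
  x ∈ O.rad k ∧ x ∉ O.rad (k + 1)

/-- `[𝔄, n, r, β]` is a pure stratum. -/
structure IsPureStratum (O : HereditaryOrder K V) (n r : ℤ)
    (β : Module.End K V) : Prop where
  lt : r < n
  isField : ∀ x ∈ Algebra.adjoin K {β}, x ≠ 0 → ∃ y ∈ Algebra.adjoin K {β}, x * y = 1
  normalizes : ∀ x ∈ Algebra.adjoin K {β}, ∀ y ∈ Algebra.adjoin K {β}, x * y = 1 →
    ∀ a : Module.End K V, a ∈ O.carrier ↔ x * a * y ∈ O.carrier
  val : O.val β (-n)

/-- `𝔑_k(β,𝔄) ⊆ 𝔅_β + 𝔓`, the condition whose largest failure defines the critical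
exponent `k₀(β,𝔄)`. -/
def NinBP (O : HereditaryOrder K V) (β : Module.End K V) (k : ℤ) : Prop :=
  ∀ x ∈ O.carrier, β * x - x * β ∈ O.rad k →
    ∃ b ∈ O.carrier, b * β = β * b ∧ x - b ∈ O.rad 1

/-- `β` is a scalar (the case `k₀(β,𝔄) = −∞`). -/
def IsScalar (K : Type*) {V : Type*} [Field K] [AddCommGroup V] [Module K V]
    (β : Module.End K V) : Prop :=
  ∃ a : K, β = algebraMap K (Module.End K V) a

/-- `k₀(β,𝔄) < −r`. -/
def k0lt (O : HereditaryOrder K V) (β : Module.End K V) (r : ℤ) : Prop :=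
  IsScalar K β ∨ ∀ k : ℤ, -r ≤ k → O.NinBP β k

/-- `k₀(β,𝔄) = c` (a finite value). -/
def k0eq (O : HereditaryOrder K V) (β : Module.End K V) (c : ℤ) : Prop :=
  ¬ IsScalar K β ∧ ¬ O.NinBP β c ∧ ∀ l : ℤ, c < l → O.NinBP β l

/-- `[𝔄, n, r, β]` is a simple stratum. -/
def IsSimpleStratum (O : HereditaryOrder K V) (n r : ℤ) (β : Module.End K V) : Prop :=
  O.IsPureStratum n r β ∧ O.k0lt β r

end HereditaryOrder

/-- Let `[𝔄, n, r, β]` be a tame pure stratum in `A = End_F(V)`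
with `r = −k₀(β, 𝔄)`.  Then for every `γ ∈ F[β]` such that `[𝔄, n, r, γ]` is a simple
stratum equivalent to `[𝔄, n, r, β]`, the derived stratum `[𝔅_γ, r, r−1, β − γ]` is
simple in `End_{F[γ]}(V)`, where `𝔅_γ = End_{F[γ]}(V) ∩ 𝔄`.

Modelling: `E = F[β]` and `K = F[γ]` are abstract fields acting on `V`, with
`F ⊆ K ⊆ E`; `β` (resp. `γ`) is the scalar action of `β_E ∈ E` with `E = F[β_E]`
(resp. of `γ_K ∈ K` with `K = F[γ_K]`).  Tameness of `E/F` is recorded by the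
normalized valuation `ν_E` and `e(E|F)` prime to the residue characteristic `p`.  The
order `𝔅_γ` is `O_K`, linked to `O = 𝔄` by `rad(𝔅_γ)^k = 𝔓^k ∩ End_K(V)`
(`hcompat`).  Equivalence `[𝔄,n,r,γ] ∼ [𝔄,n,r,β]` means `β − γ ∈ 𝔓^{−r}`, and the
derived stratum element `β − γ`, which is `K`-linear, is any `c ∈ End_K(V)` acting as
multiplication by `β_E − γ_K`. -/
theorem stmt_17 {F K E V : Type*} [Field F] [Field K] [Field E]
    [Algebra F K] [Algebra K E] [Algebra F E] [IsScalarTower F K E]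
    [AddCommGroup V] [Module F V] [Module K V] [Module E V]
    [IsScalarTower F K V] [IsScalarTower K E V]
    [FiniteDimensional F E]
    (p : ℕ) (hp : p.Prime)
    (νE : E → ℤ)
    (hmul : ∀ ⦃x y : E⦄, x ≠ 0 → y ≠ 0 → νE (x * y) = νE x + νE y)
    (πF : F) (e : ℕ) (hepos : 0 < e) (htame : Nat.Coprime e p)
    (hπF : νE (algebraMap F E πF) = e)
    (O : HereditaryOrder F V) (OK : HereditaryOrder K V)
    (hcompat : ∀ (k : ℤ) (g : Module.End K V),
      (g.restrictScalars F ∈ O.rad k ↔ g ∈ OK.rad k))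
    -- the tame pure stratum [𝔄, n, r, β] with r = −k₀(β, 𝔄)
    (βE : E) (hEgen : Algebra.adjoin F {βE} = (⊤ : Subalgebra F E))
    (β : Module.End F V) (hβ : ∀ v : V, β v = βE • v)
    (n r : ℤ)
    (hpure : O.IsPureStratum n r β)
    (hk0 : O.k0eq β (-r))
    -- γ ∈ F[β] with [𝔄, n, r, γ] simple and equivalent to [𝔄, n, r, β]
    (γK : K) (hKgen : Algebra.adjoin F {γK} = (⊤ : Subalgebra F K))
    (γ : Module.End F V) (hγ : ∀ v : V, γ v = (algebraMap K E γK) • v)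
    (hγsimple : O.IsSimpleStratum n r γ)
    (hequiv : β - γ ∈ O.rad (-r)) :
    -- the derived stratum [𝔅_γ, r, r−1, β − γ] is simple in End_{F[γ]}(V)
    ∀ c : Module.End K V, (∀ v : V, c v = (βE - algebraMap K E γK) • v) →
      OK.IsSimpleStratum r (r - 1) c := by
  intro c hc
  -- instances
  haveI iFEV : IsScalarTower F E V := ⟨fun f x v => by
    rw [Algebra.smul_def f x, IsScalarTower.algebraMap_apply F K E, ← Algebra.smul_def,
      smul_assoc, algebraMap_smul]⟩
  haveI iEKV : SMulCommClass E K V := ⟨fun x a v => by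
    rw [← algebraMap_smul E a v, ← algebraMap_smul E a (x • v), smul_smul, smul_smul,
      mul_comm]⟩
  haveI iEFV : SMulCommClass E F V := ⟨fun x a v => by
    rw [← algebraMap_smul E a v, ← algebraMap_smul E a (x • v), smul_smul, smul_smul,
      mul_comm]⟩
  haveI : FiniteDimensional K E := FiniteDimensional.right F K E
  -- the two multiplication maps
  set μF : E →ₐ[F] Module.End F V := Algebra.lsmul F F V (A := E) with hμFdef
  set μK : E →ₐ[K] Module.End K V := Algebra.lsmul K K V (A := E) with hμKdef
  set γ' : E := algebraMap K E γK with hγ'def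
  have hμβ : μF βE = β := by ext v; exact (hβ v).symm
  have hμγ : μF γ' = γ := by ext v; exact (hγ v).symm
  have hμc : μK (βE - γ') = c := by ext v; exact (hc v).symm
  have hresμ : ∀ t : E, (μK t).restrictScalars F = μF t := fun t => rfl
  have hresmul : ∀ g g' : Module.End K V,
      (g * g').restrictScalars F = g.restrictScalars F * g'.restrictScalars F :=
    fun g g' => rfl
  have hressub : ∀ g g' : Module.End K V,
      (g - g').restrictScalars F = g.restrictScalars F - g'.restrictScalars F :=
    fun g g' => by ext v; rfl
  have hresc : c.restrictScalars F = β - γ := by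
    rw [← hμc, hresμ, map_sub, hμβ, hμγ]
  -- nontriviality
  haveI hVnt : Nontrivial V := by
    rcases subsingleton_or_nontrivial V with h | h
    · exact absurd ⟨0, Subsingleton.elim _ _⟩ hk0.1
    · exact h
  have hinjK : Function.Injective μK := μK.toRingHom.injective
  -- carrier transfer
  have hcar : ∀ g : Module.End K V, g ∈ OK.carrier ↔ g.restrictScalars F ∈ O.carrier := by
    intro g
    have h := (hcompat 0 g).symm
    rwa [O.rad_zero, OK.rad_zero, Subring.mem_toAddSubgroup, Subring.mem_toAddSubgroup] at h
  -- range of μF is F[β]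
  have hrangeF : ∀ t : E, μF t ∈ Algebra.adjoin F {β} := by
    intro t
    have ht : μF t ∈ (Algebra.adjoin F {βE}).map μF :=
      Subalgebra.mem_map.mpr ⟨t, by rw [hEgen]; exact Algebra.mem_top, rfl⟩
    rwa [AlgHom.map_adjoin, Set.image_singleton, hμβ] at ht
  -- commuting with β implies commuting with every μF t
  have hcommE : ∀ b : Module.End F V, b * β = β * b → ∀ t : E, b * μF t = μF t * b := by
    intro b hb t
    have hsub : Algebra.adjoin F {βE} ≤
        Subalgebra.comap μF (Subalgebra.centralizer F {b}) := by
      apply Algebra.adjoin_le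
      rw [Set.singleton_subset_iff, SetLike.mem_coe, Subalgebra.mem_comap,
        Subalgebra.mem_centralizer_iff]
      intro g hg
      rw [Set.mem_singleton_iff] at hg
      subst hg
      rw [hμβ]
      exact hb
    have ht : t ∈ Algebra.adjoin F {βE} := by rw [hEgen]; exact Algebra.mem_top
    have := hsub ht
    rw [Subalgebra.mem_comap, Subalgebra.mem_centralizer_iff] at this
    exact this b rfl
  -- lifting an F-linear map commuting with the K-action to a K-linear map
  have hlift : ∀ b : Module.End F V,
      (∀ a : K, b * μF (algebraMap K E a) = μF (algebraMap K E a) * b) →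
      ∃ g : Module.End K V, g.restrictScalars F = b := by
    intro b hb
    refine ⟨{ toFun := b, map_add' := fun u v => b.map_add u v, map_smul' := ?_ }, by ext v; rfl⟩
    intro a v
    have h := DFunLike.congr_fun (hb a) v
    rw [Module.End.mul_apply, Module.End.mul_apply] at h
    have h' : b (algebraMap K E a • v) = algebraMap K E a • b v := h
    simp only [RingHom.id_apply]
    rw [← algebraMap_smul E a v, ← algebraMap_smul E a (b v)]
    exact h'
  -- sharpness of the valuation of β - γ
  have hsharp : β - γ ∉ O.rad (-r + 1) := by
    intro hmem
    apply hk0.2.1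
    intro x hx hxcβ
    have hx0 : x ∈ O.rad 0 := by rw [O.rad_zero]; exact Subring.mem_toAddSubgroup.mpr hx
    have e1 : (β - γ) * x ∈ O.rad (-r + 1) := by
      simpa using O.rad_mul (-r + 1) 0 _ hmem x hx0
    have e2 : x * (β - γ) ∈ O.rad (-r + 1) := by
      simpa using O.rad_mul 0 (-r + 1) x hx0 _ hmem
    rcases hγsimple.2 with hscal | hnin
    · obtain ⟨a, ha⟩ := hscal
      have hcent : γ * x = x * γ := by rw [ha]; exact Algebra.commutes a x
      have hcomm1 : β * x - x * β ∈ O.rad (-r + 1) := by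
        have h2 : (β - γ) * x - x * (β - γ) = β * x - x * β - (γ * x - x * γ) := by
          noncomm_ring
        have h3 := sub_mem e1 e2
        rw [h2, hcent, sub_self, sub_zero] at h3
        exact h3
      exact hk0.2.2 (-r + 1) (by omega) x hx hcomm1
    · have hγx : γ * x - x * γ ∈ O.rad (-r) := by
        have h2 : γ * x - x * γ = β * x - x * β - ((β - γ) * x - x * (β - γ)) := by
          noncomm_ring
        rw [h2]
        exact sub_mem hxcβ (O.rad_antitone (by omega) (sub_mem e1 e2))
      obtain ⟨b, hbO, hbγ, hxb⟩ := hnin (-r) le_rfl x hx hγx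
      have hb0 : b ∈ O.rad 0 := by rw [O.rad_zero]; exact Subring.mem_toAddSubgroup.mpr hbO
      have f1 : (β - γ) * b ∈ O.rad (-r + 1) := by
        simpa using O.rad_mul (-r + 1) 0 _ hmem b hb0
      have f2 : b * (β - γ) ∈ O.rad (-r + 1) := by
        simpa using O.rad_mul 0 (-r + 1) b hb0 _ hmem
      have hbβ : β * b - b * β ∈ O.rad (-r + 1) := by
        have h2 : (β - γ) * b - b * (β - γ) = β * b - b * β - (γ * b - b * γ) := by
          noncomm_ring
        have h3 := sub_mem f1 f2
        rw [h2, ← hbγ, sub_self, sub_zero] at h3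
        exact h3
      obtain ⟨b', hb'O, hb'β, hbb'⟩ := hk0.2.2 (-r + 1) (by omega) b hbO hbβ
      refine ⟨b', hb'O, hb'β, ?_⟩
      have h4 := add_mem hxb hbb'
      rwa [sub_add_sub_cancel] at h4
  -- description of K[c]
  have hadj : Algebra.adjoin K {c} = (Algebra.adjoin K {βE - γ'}).map μK := by
    rw [AlgHom.map_adjoin, Set.image_singleton, hμc]
  constructor
  · -- pure stratum
    refine ⟨by omega, ?_, ?_, ?_⟩
    · -- isField
      intro x hx hx0
      rw [hadj] at hx
      obtain ⟨z, hz, rfl⟩ := Subalgebra.mem_map.mp hx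
      have hz0 : z ≠ 0 := fun h => hx0 (by rw [h, map_zero])
      have hinv : z⁻¹ ∈ Algebra.adjoin K {βE - γ'} :=
        (IsIntegral.of_finite K z).inv_mem hz
      refine ⟨μK z⁻¹, ?_, ?_⟩
      · rw [hadj]; exact Subalgebra.mem_map.mpr ⟨z⁻¹, hinv, rfl⟩
      · rw [← map_mul, mul_inv_cancel₀ hz0, map_one]
    · -- normalizes
      intro x hx y hy hxy a
      rw [hadj] at hx hy
      obtain ⟨u, hu, rfl⟩ := Subalgebra.mem_map.mp hx
      obtain ⟨w, hw, rfl⟩ := Subalgebra.mem_map.mp hy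
      have huw : u * w = 1 := hinjK (by rw [map_mul, hxy, map_one])
      rw [hcar a, hcar (μK u * a * μK w)]
      rw [show (μK u * a * μK w).restrictScalars F
            = μF u * a.restrictScalars F * μF w from by
          rw [hresmul, hresmul, hresμ, hresμ]]
      exact hpure.normalizes (μF u) (hrangeF u) (μF w) (hrangeF w)
        (by rw [← map_mul, huw, map_one]) (a.restrictScalars F)
    · -- valuation
      constructor
      · exact (hcompat (-r) c).mp (by rw [hresc]; exact hequiv)
      · intro h
        exact hsharp (by rw [← hresc]; exact (hcompat (-r + 1) c).mpr h)
  · -- k₀(c, 𝔅) < -(r-1)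
    refine Or.inr fun k hk x hx hxcomm => ?_
    have hx' : x.restrictScalars F ∈ O.carrier := (hcar x).mp hx
    have hxγ : γ * x.restrictScalars F = x.restrictScalars F * γ := by
      ext v
      show γ (x v) = x (γ v)
      rw [hγ (x v), hγ v, hγ'def, algebraMap_smul E γK v, algebraMap_smul E γK (x v),
        map_smul]
    have hres_comm : (c * x - x * c).restrictScalars F
        = β * x.restrictScalars F - x.restrictScalars F * β := by
      rw [hressub, hresmul, hresmul, hresc]
      have h2 : (β - γ) * x.restrictScalars F - x.restrictScalars F * (β - γ)
          = β * x.restrictScalars F - x.restrictScalars F * β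
            - (γ * x.restrictScalars F - x.restrictScalars F * γ) := by noncomm_ring
      rw [h2, hxγ, sub_self, sub_zero]
    have hbcomm : β * x.restrictScalars F - x.restrictScalars F * β ∈ O.rad k := by
      rw [← hres_comm]
      exact (hcompat k _).mpr hxcomm
    obtain ⟨b, hbO, hbβ, hxb⟩ := hk0.2.2 k (by omega) _ hx' hbcomm
    have hbE := hcommE b hbβ
    obtain ⟨g, hg⟩ := hlift b (fun a => hbE (algebraMap K E a))
    refine ⟨g, (hcar g).mpr (by rw [hg]; exact hbO), ?_, ?_⟩
    · apply LinearMap.restrictScalars_injective F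
      rw [hresmul, hresmul, hg, hresc]
      have h1 : b * γ = γ * b := by rw [← hμγ]; exact hbE γ'
      rw [mul_sub, sub_mul, hbβ, h1]
    · apply (hcompat 1 _).mp
      rw [hressub, hg]
      exact hxb
end
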